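/- arXiv:1411.7315 — 3 statements merged into one kernel-verified Lean document; each statement's English description precedes it below -/
import Mathlib

section
/- For every string s over Σ: d_G(G,s) = 0 if and only if there exists a derivation of s from S in the augmented grammar G_e of score 0; and d_G(G,s) = 1 if and only if there exists a derivation of s from S in G_e of score 1 and no derivation of s from S in G_e of score 0. -/
/-- A scored production of a grammar: a left-hand-side nonterminal, a right-hand-side
string of nonterminals and terminals, and a score (edit cost). -/
structure ScoredProd (N : Type*) (T : Type*) where
  lhs : N
  rhs : List (N ⊕ T)
  score : ℕ

/-- `ScoredDerives P u v c` : from the sentential form `u` one can derive the sentential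
form `v` using productions from `P` whose scores sum to `c`. -/
inductive ScoredDerives {N T : Type*} (P : Set (ScoredProd N T)) :
    List (N ⊕ T) → List (N ⊕ T) → ℕ → Prop
  | refl (w : List (N ⊕ T)) : ScoredDerives P w w 0
  | step {u l r : List (N ⊕ T)} {p : ScoredProd N T} {c : ℕ} :
      ScoredDerives P u (l ++ [Sum.inl p.lhs] ++ r) c → p ∈ P →
      ScoredDerives P u (l ++ p.rhs ++ r) (c + p.score)

/-- A context-free grammar in Chomsky normal form: binary rules `A → BC`,
terminal rules `A → a`, and possibly the rule `S → ε` (recorded by `eps`). -/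
structure CNF (N : Type*) (T : Type*) where
  start : N
  bin : Set (N × N × N)
  term : Set (N × T)
  eps : Prop

/-- The productions of the CNF grammar `G`, all of score `0`. -/
def CNF.prods {N T : Type*} (G : CNF N T) : Set (ScoredProd N T) :=
  {p | (∃ A B C, (A, B, C) ∈ G.bin ∧ p = ⟨A, [Sum.inl B, Sum.inl C], 0⟩) ∨
       (∃ A a, (A, a) ∈ G.term ∧ p = ⟨A, [Sum.inr a], 0⟩) ∨
       (G.eps ∧ p = ⟨G.start, [], 0⟩)}

/-- Lift a production of `G` to the augmented grammar `G_e`, whose nonterminals are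
`N ⊕ Unit` (with `Sum.inr ()` playing the role of the fresh nonterminal `I`). -/
def liftProd {N T : Type*} (p : ScoredProd N T) : ScoredProd (N ⊕ Unit) T :=
  ⟨Sum.inl p.lhs, p.rhs.map (Sum.map Sum.inl id), p.score⟩

/-- The productions of the augmented grammar `G_e`: the original productions of `G`
(score 0), elementary substitution rules `A → y` of score 1 (for `A` having some
terminal rule and `y` with `A → y ∉ P`), elementary insertion rules `I → x` of score 1,
rules `A → IA`, `A → AI` of score 0, `I → II` of score 0, and elementary deletion rules
`A → ε` of score 1 for every terminal rule `A → x` of `G`. -/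
def CNF.augProds {N T : Type*} (G : CNF N T) : Set (ScoredProd (N ⊕ Unit) T) :=
  (liftProd '' G.prods) ∪
  {p | ∃ A y, (∃ x, (A, x) ∈ G.term) ∧ (A, y) ∉ G.term ∧
        p = ⟨Sum.inl A, [Sum.inr y], 1⟩} ∪
  {p | ∃ x, p = ⟨Sum.inr (), [Sum.inr x], 1⟩} ∪
  {p | ∃ A : N, p = ⟨Sum.inl A, [Sum.inl (Sum.inr ()), Sum.inl (Sum.inl A)], 0⟩ ∨
                p = ⟨Sum.inl A, [Sum.inl (Sum.inl A), Sum.inl (Sum.inr ())], 0⟩} ∪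
  {(⟨Sum.inr (), [Sum.inl (Sum.inr ()), Sum.inl (Sum.inr ())], 0⟩ : ScoredProd (N ⊕ Unit) T)} ∪
  {p | ∃ A x, (A, x) ∈ G.term ∧ p = ⟨Sum.inl A, [], 1⟩}

/-- `A ⇒* s` in the grammar `G`. -/
def CNF.Derives {N T : Type*} (G : CNF N T) (A : N) (s : List T) : Prop :=
  ∃ u, ScoredDerives G.prods [Sum.inl A] (s.map Sum.inr) u

/-- The language of `G`. -/
def CNF.lang {N T : Type*} (G : CNF N T) : Set (List T) := {s | G.Derives G.start s}

/-- `A ⇒* s` in the augmented grammar `G_e` with a derivation of score exactly `u`. -/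
def CNF.augDerives {N T : Type*} (G : CNF N T) (A : N ⊕ Unit) (s : List T) (u : ℕ) : Prop :=
  ScoredDerives G.augProds [Sum.inl A] (s.map Sum.inr) u

/-- Costs for the Levenshtein distance (formerly `Levenshtein.Cost` in Mathlib). -/
structure Levenshtein.Cost (α β δ : Type*) where
  delete : α → δ
  insert : β → δ
  substitute : α → β → δ

/-- Unit costs (formerly `Levenshtein.defaultCost` in Mathlib). -/
def Levenshtein.defaultCost {α : Type*} [DecidableEq α] : Levenshtein.Cost α α ℕ where
  delete _ := 1
  insert _ := 1
  substitute a b := if a = b then 0 else 1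

/-- The Levenshtein distance (formerly `levenshtein` in Mathlib), by its defining recursion. -/
def levenshtein {α β δ : Type*} [AddZeroClass δ] [Min δ] (C : Levenshtein.Cost α β δ) :
    List α → List β → δ
  | [], [] => 0
  | [], y :: ys => C.insert y + levenshtein C [] ys
  | x :: xs, [] => C.delete x + levenshtein C xs []
  | x :: xs, y :: ys =>
      min (C.delete x + levenshtein C xs (y :: ys))
        (min (C.insert y + levenshtein C (x :: xs) ys) (C.substitute x y + levenshtein C xs ys))

/-- The standard (unit-cost) string edit distance. -/
def editDist {T : Type*} [DecidableEq T] (s t : List T) : ℕ :=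
  levenshtein Levenshtein.defaultCost s t

/-- The language edit distance `d_G(G,s) = min_{z ∈ L(G)} d_ed(s,z)`. -/
noncomputable def dG {N T : Type*} [DecidableEq T] (G : CNF N T) (s : List T) : ℕ :=
  sInf {d | ∃ z ∈ G.lang, editDist s z = d}

/-! A derivation in `G_e` is simulated by a derivation in `G` together with an edit alignment of
the two sentential forms whose cost never exceeds the score: nonterminals of `G` match themselves,
`I` matches nothing, a substitution or deletion rule `A → y`, `A → ε` is replayed in `G` by a
terminal rule `A → x`, and each rule of score `1` costs one edit. So a derivation of `s` of score
`c` yields `z ∈ L(G)` with `d_ed(s, z) ≤ c`. Conversely, `G` embeds into `G_e` at score `0`, and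
if `s` is one edit away from `z ∈ L(G)`, the edit sits at a leaf `A → y` of a derivation of `z`,
where `A → x` (unless it is a rule of `G`, and then `s ∈ L(G)`), `A → ε` or `A → IA`, `I → x`
realises it at score `1`; an insertion at the very end uses `S → SI`, `I → x`. -/

theorem List.append_eq_append_cons {α : Type*} {l r a b : List α} {x : α}
    (h : l ++ r = a ++ x :: b) :
    (∃ t, l = a ++ x :: t ∧ b = t ++ r) ∨ (∃ t, a = l ++ t ∧ r = t ++ x :: b) := by
  rcases List.append_eq_append_iff.mp h with ⟨t, ha, hr⟩ | ⟨t, hl, hxb⟩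
  · exact .inr ⟨t, ha, hr⟩
  · rcases List.cons_eq_append_iff.mp hxb with ⟨rfl, hr⟩ | ⟨t', rfl, hb⟩
    · exact .inr ⟨[], by simpa using hl.symm, hr⟩
    · exact .inl ⟨t', hl, hb⟩

theorem List.append_append_eq_append_cons {α : Type*} {l m r a b : List α} {x : α}
    (h : l ++ m ++ r = a ++ x :: b) :
    (∃ t, l = a ++ x :: t ∧ b = t ++ m ++ r) ∨
    (∃ m₁ m₂, m = m₁ ++ x :: m₂ ∧ a = l ++ m₁ ∧ b = m₂ ++ r) ∨
    (∃ t, r = t ++ x :: b ∧ a = l ++ m ++ t) := by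
  rcases List.append_eq_append_cons h with ⟨t, hlm, rfl⟩ | ⟨t, rfl, hr⟩
  · rcases List.append_eq_append_cons hlm with ⟨t', hl, rfl⟩ | ⟨t', rfl, hm⟩
    · exact .inl ⟨t', hl, by simp⟩
    · exact .inr (.inl ⟨t', t, hm, rfl, rfl⟩)
  · exact .inr (.inr ⟨t, hr, rfl⟩)

inductive OneEdit {T : Type*} : List T → List T → Prop
  | insert (l : List T) (x : T) (r : List T) : OneEdit (l ++ x :: r) (l ++ r)
  | delete (l : List T) (x : T) (r : List T) : OneEdit (l ++ r) (l ++ x :: r)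
  | replace (l : List T) (x y : T) (r : List T) : OneEdit (l ++ x :: r) (l ++ y :: r)

theorem OneEdit.cons {T : Type*} {s z : List T} (a : T) (h : OneEdit s z) :
    OneEdit (a :: s) (a :: z) := by
  cases h with
  | insert l x r => exact .insert (a :: l) x r
  | delete l x r => exact .delete (a :: l) x r
  | replace l x y r => exact .replace (a :: l) x y r

section EditDistance

variable {T : Type*} [DecidableEq T]

@[simp] theorem editDist_nil_nil : editDist ([] : List T) [] = 0 := by
  rw [editDist, levenshtein]

@[simp] theorem editDist_nil_cons (y : T) (ys : List T) :
    editDist [] (y :: ys) = 1 + editDist [] ys := by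
  rw [editDist, levenshtein]; rfl

@[simp] theorem editDist_cons_nil (x : T) (xs : List T) :
    editDist (x :: xs) [] = 1 + editDist xs [] := by
  rw [editDist, levenshtein]; rfl

theorem editDist_cons_cons (x y : T) (xs ys : List T) :
    editDist (x :: xs) (y :: ys) =
      min (1 + editDist xs (y :: ys))
        (min (1 + editDist (x :: xs) ys) ((if x = y then 0 else 1) + editDist xs ys)) := by
  rw [editDist, levenshtein]; rfl

theorem editDist_cons_left_le (a : T) (s z : List T) :
    editDist (a :: s) z ≤ 1 + editDist s z := by
  cases z with
  | nil => simp
  | cons b z => rw [editDist_cons_cons]; exact min_le_left _ _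

theorem editDist_cons_right_le (b : T) (s z : List T) :
    editDist s (b :: z) ≤ 1 + editDist s z := by
  cases s with
  | nil => simp
  | cons a s => rw [editDist_cons_cons]; exact (min_le_right _ _).trans (min_le_left _ _)

theorem editDist_cons_cons_le (a b : T) (s z : List T) :
    editDist (a :: s) (b :: z) ≤ (if a = b then 0 else 1) + editDist s z := by
  rw [editDist_cons_cons]; exact (min_le_right _ _).trans (min_le_right _ _)

theorem editDist_self (s : List T) : editDist s s = 0 := by
  induction s with
  | nil => simp
  | cons a s ih => simpa [ih] using editDist_cons_cons_le a a s s

theorem editDist_eq_zero_iff {s z : List T} : editDist s z = 0 ↔ s = z := by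
  refine ⟨fun h => ?_, fun h => h ▸ editDist_self s⟩
  induction s generalizing z with
  | nil => cases z <;> simp_all
  | cons a s ih =>
    cases z with
    | nil => simp at h
    | cons b z =>
      obtain ⟨rfl, hsz⟩ : a = b ∧ editDist s z = 0 := by
        rw [editDist_cons_cons] at h
        split_ifs at h <;> simp_all
      rw [ih hsz]

theorem eq_or_oneEdit_of_editDist_le_one {s z : List T}
    (h : editDist s z ≤ 1) : s = z ∨ OneEdit s z := by
  induction s generalizing z with
  | nil =>
    cases z with
    | nil => exact .inl rfl
    | cons b z =>
      obtain rfl : [] = z := editDist_eq_zero_iff.mp (by simp at h; omega)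
      exact .inr (.delete [] b [])
  | cons a s ih =>
    cases z with
    | nil =>
      obtain rfl : s = [] := editDist_eq_zero_iff.mp (by simp at h; omega)
      exact .inr (.insert [] a [])
    | cons b z =>
      simp only [editDist_cons_cons, min_le_iff] at h
      rcases h with h | h | h
      · obtain rfl : s = b :: z := editDist_eq_zero_iff.mp (by omega)
        exact .inr (.insert [] a _)
      · obtain rfl : a :: s = z := editDist_eq_zero_iff.mp (by omega)
        exact .inr (.delete [] b _)
      · by_cases hab : a = b
        · subst hab
          rcases ih (by simpa using h) with rfl | h
          · exact .inl rfl
          · exact .inr (h.cons a)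
        · obtain rfl : s = z := editDist_eq_zero_iff.mp (by simp [hab] at h; omega)
          exact .inr (.replace [] a b s)

end EditDistance

namespace ScoredDerives

variable {N T : Type*} {P : Set (ScoredProd N T)}

theorem trans {u v w : List (N ⊕ T)} {c₁ c₂ : ℕ} (h₁ : ScoredDerives P u v c₁)
    (h₂ : ScoredDerives P v w c₂) : ScoredDerives P u w (c₁ + c₂) := by
  induction h₂ with
  | refl => exact h₁
  | step _ hp ih => exact Nat.add_assoc .. ▸ ih.step hp

theorem append_right {u v : List (N ⊕ T)} {c : ℕ} (h : ScoredDerives P u v c)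
    (w : List (N ⊕ T)) : ScoredDerives P (u ++ w) (v ++ w) c := by
  induction h with
  | refl => exact .refl _
  | @step l r p c _ hp ih =>
    simpa using ScoredDerives.step (l := l) (r := r ++ w) (by simpa using ih) hp

theorem append_left {u v : List (N ⊕ T)} {c : ℕ} (h : ScoredDerives P u v c)
    (w : List (N ⊕ T)) : ScoredDerives P (w ++ u) (w ++ v) c := by
  induction h with
  | refl => exact .refl _
  | @step l r p c _ hp ih =>
    simpa using ScoredDerives.step (l := w ++ l) (r := r) (by simpa using ih) hp

theorem append {u₁ v₁ u₂ v₂ : List (N ⊕ T)} {c₁ c₂ : ℕ} (h₁ : ScoredDerives P u₁ v₁ c₁)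
    (h₂ : ScoredDerives P u₂ v₂ c₂) : ScoredDerives P (u₁ ++ u₂) (v₁ ++ v₂) (c₁ + c₂) :=
  (h₁.append_right u₂).trans (h₂.append_left v₁)

theorem single {p : ScoredProd N T} (hp : p ∈ P) :
    ScoredDerives P [Sum.inl p.lhs] p.rhs p.score := by
  simpa using ScoredDerives.step (l := []) (r := []) (.refl [Sum.inl p.lhs]) hp

end ScoredDerives

namespace CNF

variable {N T : Type*} {G : CNF N T}

theorem score_eq_zero_of_mem_prods {p : ScoredProd N T} (hp : p ∈ G.prods) : p.score = 0 := by
  rcases hp with ⟨_, _, _, _, rfl⟩ | ⟨_, _, _, rfl⟩ | ⟨_, rfl⟩ <;> rfl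

theorem score_eq_zero_of_scoredDerives {u v : List (N ⊕ T)} {c : ℕ}
    (h : ScoredDerives G.prods u v c) : c = 0 := by
  induction h with
  | refl => rfl
  | step _ hp ih => rw [ih, score_eq_zero_of_mem_prods hp]

theorem scoredDerives_of_mem_prods {p : ScoredProd N T} (hp : p ∈ G.prods)
    (l r : List (N ⊕ T)) : ScoredDerives G.prods (l ++ [Sum.inl p.lhs] ++ r) (l ++ p.rhs ++ r) 0 :=
  score_eq_zero_of_mem_prods hp ▸ (zero_add p.score ▸ ScoredDerives.step (.refl _) hp)

theorem term_mem_prods {A : N} {x : T} (hx : (A, x) ∈ G.term) :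
    ⟨A, [Sum.inr x], 0⟩ ∈ G.prods :=
  Or.inr <| Or.inl ⟨A, x, hx, rfl⟩

theorem liftProd_mem_augProds {p : ScoredProd N T} (hp : p ∈ G.prods) :
    liftProd p ∈ G.augProds :=
  .inl <| .inl <| .inl <| .inl <| .inl ⟨p, hp, rfl⟩

theorem subst_mem_augProds {A : N} {x y : T} (hx : (A, x) ∈ G.term) (hy : (A, y) ∉ G.term) :
    ⟨Sum.inl A, [Sum.inr y], 1⟩ ∈ G.augProds :=
  .inl <| .inl <| .inl <| .inl <| .inr ⟨A, y, ⟨x, hx⟩, hy, rfl⟩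

theorem insert_mem_augProds (x : T) : ⟨Sum.inr (), [Sum.inr x], 1⟩ ∈ G.augProds :=
  .inl <| .inl <| .inl <| .inr ⟨x, rfl⟩

theorem insertLeft_mem_augProds (A : N) :
    ⟨Sum.inl A, [Sum.inl (Sum.inr ()), Sum.inl (Sum.inl A)], 0⟩ ∈ G.augProds :=
  .inl <| .inl <| .inr ⟨A, .inl rfl⟩

theorem insertRight_mem_augProds (A : N) :
    ⟨Sum.inl A, [Sum.inl (Sum.inl A), Sum.inl (Sum.inr ())], 0⟩ ∈ G.augProds :=
  .inl <| .inl <| .inr ⟨A, .inr rfl⟩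

theorem delete_mem_augProds {A : N} {x : T} (hx : (A, x) ∈ G.term) :
    ⟨Sum.inl A, [], 1⟩ ∈ G.augProds :=
  .inr ⟨A, x, hx, rfl⟩

theorem term_mem_augProds {A : N} {x : T} (hx : (A, x) ∈ G.term) :
    ⟨Sum.inl A, [Sum.inr x], 0⟩ ∈ G.augProds :=
  liftProd_mem_augProds (term_mem_prods hx)

theorem scoredDerives_lift {u v : List (N ⊕ T)} {c : ℕ} (h : ScoredDerives G.prods u v c) :
    ScoredDerives G.augProds (u.map (Sum.map Sum.inl id)) (v.map (Sum.map Sum.inl id)) c := by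
  induction h with
  | refl => exact .refl _
  | @step l r p c _ hp ih =>
    simpa [liftProd] using ScoredDerives.step (l := l.map (Sum.map Sum.inl id))
      (r := r.map (Sum.map Sum.inl id)) (by simpa [liftProd] using ih) (liftProd_mem_augProds hp)

theorem augDerives_zero_of_mem_lang {s : List T} (hs : s ∈ G.lang) :
    G.augDerives (Sum.inl G.start) s 0 := by
  obtain ⟨c, hc⟩ := hs
  obtain rfl := score_eq_zero_of_scoredDerives hc
  simpa [augDerives, Function.comp_def] using scoredDerives_lift hc

end CNF

inductive EditAlign {N T : Type*} : List ((N ⊕ Unit) ⊕ T) → List (N ⊕ T) → ℕ → Prop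
  | nil : EditAlign [] [] 0
  | nonterm (A : N) {w v k} : EditAlign w v k →
      EditAlign (Sum.inl (Sum.inl A) :: w) (Sum.inl A :: v) k
  | skip {w v k} : EditAlign w v k → EditAlign (Sum.inl (Sum.inr ()) :: w) v k
  | keep (a : T) {w v k} : EditAlign w v k → EditAlign (Sum.inr a :: w) (Sum.inr a :: v) k
  | replace (a b : T) {w v k} : EditAlign w v k →
      EditAlign (Sum.inr a :: w) (Sum.inr b :: v) (k + 1)
  | insert (a : T) {w v k} : EditAlign w v k → EditAlign (Sum.inr a :: w) v (k + 1)
  | delete (b : T) {w v k} : EditAlign w v k → EditAlign w (Sum.inr b :: v) (k + 1)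

namespace EditAlign

variable {N T : Type*}

theorem append {w₁ w₂ : List ((N ⊕ Unit) ⊕ T)} {v₁ v₂ : List (N ⊕ T)} {k₁ k₂ : ℕ}
    (h₁ : EditAlign w₁ v₁ k₁) (h₂ : EditAlign w₂ v₂ k₂) :
    EditAlign (w₁ ++ w₂) (v₁ ++ v₂) (k₁ + k₂) := by
  induction h₁ with
  | nil => simpa using h₂
  | nonterm A _ ih => exact ih.nonterm A
  | skip _ ih => exact ih.skip
  | keep a _ ih => exact ih.keep a
  | replace a b _ ih => exact Nat.add_right_comm .. ▸ ih.replace a b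
  | insert a _ ih => exact Nat.add_right_comm .. ▸ ih.insert a
  | delete b _ ih => exact Nat.add_right_comm .. ▸ ih.delete b

theorem lift : ∀ v : List (N ⊕ T), EditAlign (v.map (Sum.map Sum.inl id)) v 0
  | [] => .nil
  | Sum.inl A :: v => (lift v).nonterm A
  | Sum.inr a :: v => (lift v).keep a

theorem exists_of_append {l r : List ((N ⊕ Unit) ⊕ T)} {v : List (N ⊕ T)} {k : ℕ}
    (h : EditAlign (l ++ r) v k) :
    ∃ v₁ v₂ k₁ k₂, v = v₁ ++ v₂ ∧ EditAlign l v₁ k₁ ∧ EditAlign r v₂ k₂ ∧ k = k₁ + k₂ := by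
  generalize hw : l ++ r = w at h
  induction h generalizing l with
  | nil =>
    obtain ⟨rfl, rfl⟩ := List.append_eq_nil_iff.mp hw
    exact ⟨[], [], 0, 0, rfl, .nil, .nil, rfl⟩
  | delete b _ ih =>
    obtain ⟨v₁, v₂, k₁, k₂, rfl, h₁, h₂, rfl⟩ := ih hw
    exact ⟨_, v₂, _, k₂, rfl, h₁.delete b, h₂, by omega⟩
  | nonterm A h ih =>
    rcases l with _ | ⟨_, l⟩
    · exact ⟨[], _, 0, _, rfl, .nil, hw ▸ h.nonterm A, by simp⟩
    obtain ⟨rfl, hlr⟩ := List.cons_eq_cons.mp hw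
    obtain ⟨v₁, v₂, k₁, k₂, rfl, h₁, h₂, rfl⟩ := ih hlr
    exact ⟨_, v₂, _, k₂, rfl, h₁.nonterm A, h₂, rfl⟩
  | skip h ih =>
    rcases l with _ | ⟨_, l⟩
    · exact ⟨[], _, 0, _, rfl, .nil, hw ▸ h.skip, by simp⟩
    obtain ⟨rfl, hlr⟩ := List.cons_eq_cons.mp hw
    obtain ⟨v₁, v₂, k₁, k₂, rfl, h₁, h₂, rfl⟩ := ih hlr
    exact ⟨_, v₂, _, k₂, rfl, h₁.skip, h₂, rfl⟩
  | keep a h ih =>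
    rcases l with _ | ⟨_, l⟩
    · exact ⟨[], _, 0, _, rfl, .nil, hw ▸ h.keep a, by simp⟩
    obtain ⟨rfl, hlr⟩ := List.cons_eq_cons.mp hw
    obtain ⟨v₁, v₂, k₁, k₂, rfl, h₁, h₂, rfl⟩ := ih hlr
    exact ⟨_, v₂, _, k₂, rfl, h₁.keep a, h₂, rfl⟩
  | replace a b h ih =>
    rcases l with _ | ⟨_, l⟩
    · exact ⟨[], _, 0, _, rfl, .nil, hw ▸ h.replace a b, by simp⟩
    obtain ⟨rfl, hlr⟩ := List.cons_eq_cons.mp hw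
    obtain ⟨v₁, v₂, k₁, k₂, rfl, h₁, h₂, rfl⟩ := ih hlr
    exact ⟨_, v₂, _, k₂, rfl, h₁.replace a b, h₂, by omega⟩
  | insert a h ih =>
    rcases l with _ | ⟨_, l⟩
    · exact ⟨[], _, 0, _, rfl, .nil, hw ▸ h.insert a, by simp⟩
    obtain ⟨rfl, hlr⟩ := List.cons_eq_cons.mp hw
    obtain ⟨v₁, v₂, k₁, k₂, rfl, h₁, h₂, rfl⟩ := ih hlr
    exact ⟨_, v₂, _, k₂, rfl, h₁.insert a, h₂, by omega⟩

theorem exists_of_singleton_nonterm {A : N} {v : List (N ⊕ T)} {k : ℕ}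
    (h : EditAlign [Sum.inl (Sum.inl A)] v k) :
    ∃ d₁ d₂ k₁ k₂, v = d₁ ++ [Sum.inl A] ++ d₂ ∧ EditAlign [] d₁ k₁ ∧ EditAlign [] d₂ k₂ ∧
      k = k₁ + k₂ := by
  generalize hw : [Sum.inl (Sum.inl A)] = w at h
  induction h with
  | nonterm A' h _ =>
    obtain ⟨⟨⟩, rfl⟩ := List.cons_eq_cons.mp hw
    exact ⟨[], _, 0, _, rfl, .nil, h, by simp⟩
  | delete b _ ih =>
    obtain ⟨d₁, d₂, k₁, k₂, rfl, h₁, h₂, rfl⟩ := ih hw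
    exact ⟨_, d₂, _, k₂, rfl, h₁.delete b, h₂, by omega⟩
  | _ => simp at hw

theorem of_cons_skip {w : List ((N ⊕ Unit) ⊕ T)} {v : List (N ⊕ T)} {k : ℕ}
    (h : EditAlign (Sum.inl (Sum.inr ()) :: w) v k) : EditAlign w v k := by
  generalize hw : Sum.inl (Sum.inr ()) :: w = w' at h
  induction h with
  | skip h _ => exact (List.cons_eq_cons.mp hw).2 ▸ h
  | delete b _ ih => exact (ih hw).delete b
  | _ => simp at hw

theorem exists_editDist_le [DecidableEq T] {s : List T}
    {v : List (N ⊕ T)} {k : ℕ} (h : EditAlign (s.map Sum.inr) v k) :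
    ∃ z : List T, v = z.map Sum.inr ∧ editDist s z ≤ k := by
  generalize hw : s.map Sum.inr = w at h
  induction h generalizing s with
  | nil => exact ⟨[], rfl, by simp_all⟩
  | nonterm => cases s <;> simp at hw
  | skip => cases s <;> simp at hw
  | keep a _ ih =>
    obtain ⟨_, s, rfl, ⟨⟩, hs⟩ := List.map_eq_cons_iff.mp hw
    obtain ⟨z, rfl, hz⟩ := ih hs
    exact ⟨a :: z, rfl, (editDist_cons_cons_le a a s z).trans (by simpa using hz)⟩
  | replace a b _ ih =>
    obtain ⟨_, s, rfl, ⟨⟩, hs⟩ := List.map_eq_cons_iff.mp hw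
    obtain ⟨z, rfl, hz⟩ := ih hs
    exact ⟨b :: z, rfl, (editDist_cons_cons_le a b s z).trans (by split <;> omega)⟩
  | insert a _ ih =>
    obtain ⟨_, s, rfl, ⟨⟩, hs⟩ := List.map_eq_cons_iff.mp hw
    obtain ⟨z, rfl, hz⟩ := ih hs
    exact ⟨z, rfl, (editDist_cons_left_le a s z).trans (by omega)⟩
  | delete b _ ih =>
    obtain ⟨z, rfl, hz⟩ := ih hw
    exact ⟨b :: z, rfl, (editDist_cons_right_le b s z).trans (by omega)⟩

end EditAlign

namespace CNF

variable {N T : Type*} {G : CNF N T}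

theorem exists_editAlign_rhs_of_mem_augProds {p : ScoredProd (N ⊕ Unit) T} (hp : p ∈ G.augProds)
    {τ : List (N ⊕ T)} {k : ℕ} (h : EditAlign [Sum.inl p.lhs] τ k) :
    ∃ τ' k', ScoredDerives G.prods τ τ' 0 ∧ EditAlign p.rhs τ' k' ∧ k' ≤ k + p.score := by
  rcases hp with ((((⟨q, hq, rfl⟩ | ⟨A, y, ⟨x, hx⟩, -, rfl⟩) | ⟨x, rfl⟩) | ⟨A, rfl | rfl⟩) | rfl) |
    ⟨A, x, hx, rfl⟩
  · obtain ⟨d₁, d₂, k₁, k₂, rfl, h₁, h₂, rfl⟩ := h.exists_of_singleton_nonterm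
    refine ⟨d₁ ++ q.rhs ++ d₂, k₁ + 0 + k₂, scoredDerives_of_mem_prods hq d₁ d₂, ?_, by simp⟩
    simpa [liftProd] using (h₁.append (EditAlign.lift q.rhs)).append h₂
  · obtain ⟨d₁, d₂, k₁, k₂, rfl, h₁, h₂, rfl⟩ := h.exists_of_singleton_nonterm
    exact ⟨d₁ ++ [Sum.inr x] ++ d₂, k₁ + (k₂ + 1),
      scoredDerives_of_mem_prods (term_mem_prods hx) d₁ d₂,
      by simpa using h₁.append (h₂.replace y x), by simp; omega⟩
  · exact ⟨τ, k + 1, .refl τ, h.of_cons_skip.insert x, le_rfl⟩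
  · exact ⟨τ, k, .refl τ, h.skip, le_rfl⟩
  · exact ⟨τ, k, .refl τ, by simpa using h.append EditAlign.nil.skip, le_rfl⟩
  · exact ⟨τ, k, .refl τ, h.of_cons_skip.skip.skip, le_rfl⟩
  · obtain ⟨d₁, d₂, k₁, k₂, rfl, h₁, h₂, rfl⟩ := h.exists_of_singleton_nonterm
    exact ⟨d₁ ++ [Sum.inr x] ++ d₂, k₁ + (k₂ + 1),
      scoredDerives_of_mem_prods (term_mem_prods hx) d₁ d₂,
      by simpa using h₁.append (h₂.delete x), by simp; omega⟩

theorem exists_scoredDerives_editAlign {w₀ w : List ((N ⊕ Unit) ⊕ T)} {v₀ : List (N ⊕ T)}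
    {k₀ c : ℕ} (h₀ : EditAlign w₀ v₀ k₀) (h : ScoredDerives G.augProds w₀ w c) :
    ∃ v k, ScoredDerives G.prods v₀ v 0 ∧ EditAlign w v k ∧ k ≤ k₀ + c := by
  induction h with
  | refl => exact ⟨v₀, k₀, .refl _, h₀, by simp⟩
  | @step l r p c _ hp ih =>
    obtain ⟨v, k, hv, ha, hk⟩ := ih
    obtain ⟨v₁, v', k₁, k', rfl, h₁, ha', rfl⟩ :=
      EditAlign.exists_of_append (l := l) (r := [Sum.inl p.lhs] ++ r) (by simpa using ha)
    obtain ⟨τ, v₂, kτ, k₂, rfl, hτ, h₂, rfl⟩ := ha'.exists_of_append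
    obtain ⟨τ', kτ', hττ', hτ', hkτ⟩ := exists_editAlign_rhs_of_mem_augProds hp hτ
    refine ⟨v₁ ++ τ' ++ v₂, k₁ + kτ' + k₂, ?_, (h₁.append hτ').append h₂, by omega⟩
    have hstep : ScoredDerives G.prods (v₁ ++ (τ ++ v₂)) (v₁ ++ τ' ++ v₂) 0 := by
      simpa using ((ScoredDerives.refl v₁).append hττ').append (.refl v₂)
    simpa using hv.trans hstep

theorem exists_mem_lang_editDist_le [DecidableEq T] {s : List T} {c : ℕ}
    (h : G.augDerives (Sum.inl G.start) s c) : ∃ z ∈ G.lang, editDist s z ≤ c := by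
  obtain ⟨v, k, hv, ha, hk⟩ := exists_scoredDerives_editAlign (EditAlign.nil.nonterm G.start) h
  obtain ⟨z, rfl, hz⟩ := ha.exists_editDist_le
  exact ⟨z, ⟨0, hv⟩, by omega⟩

theorem mem_term_of_rhs_eq {p : ScoredProd N T} (hp : p ∈ G.prods) {m₁ m₂ : List (N ⊕ T)}
    {x : T} (hm : p.rhs = m₁ ++ Sum.inr x :: m₂) : m₁ = [] ∧ m₂ = [] ∧ (p.lhs, x) ∈ G.term := by
  rcases hp with ⟨A, B, C, -, rfl⟩ | ⟨A, a, ha, rfl⟩ | ⟨-, rfl⟩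
  · have : Sum.inr x ∈ [Sum.inl B, Sum.inl C] := by simp only at hm; simp [hm]
    simp at this
  · obtain ⟨rfl, rfl, rfl⟩ : m₁ = [] ∧ x = a ∧ m₂ = [] := by
      simpa [List.singleton_eq_append_iff] using hm
    exact ⟨rfl, rfl, ha⟩
  · simp at hm

theorem exists_term_source {u v a b : List (N ⊕ T)} {x : T} {c : ℕ}
    (h : ScoredDerives G.prods u v c) (hv : v = a ++ Sum.inr x :: b) :
    ∃ w₁ σ w₂, ScoredDerives G.prods u (w₁ ++ [σ] ++ w₂) 0 ∧ ScoredDerives G.prods w₁ a 0 ∧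
      ScoredDerives G.prods w₂ b 0 ∧
      (u = w₁ ++ [σ] ++ w₂ ∧ σ = Sum.inr x ∨ ∃ A, σ = Sum.inl A ∧ (A, x) ∈ G.term) := by
  induction h generalizing a b with
  | refl => exact ⟨a, _, b, by simpa [hv] using .refl _, .refl a, .refl b, .inl ⟨by simp [hv], rfl⟩⟩
  | @step l r p c hd hp ih =>
    rcases List.append_append_eq_append_cons hv with
      ⟨t, rfl, rfl⟩ | ⟨m₁, m₂, hm, rfl, rfl⟩ | ⟨t, rfl, rfl⟩
    · obtain ⟨w₁, σ, w₂, hu, h₁, h₂, hσ⟩ := ih (a := a) (b := t ++ [Sum.inl p.lhs] ++ r) (by simp)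
      refine ⟨w₁, σ, w₂, hu, h₁, ?_, hσ⟩
      simpa using h₂.trans (scoredDerives_of_mem_prods hp t r)
    · obtain ⟨rfl, rfl, hx⟩ := mem_term_of_rhs_eq hp hm
      exact ⟨l, _, r, score_eq_zero_of_scoredDerives hd ▸ hd, by simpa using .refl l,
        by simpa using .refl r, .inr ⟨_, rfl, hx⟩⟩
    · obtain ⟨w₁, σ, w₂, hu, h₁, h₂, hσ⟩ := ih (a := l ++ [Sum.inl p.lhs] ++ t) (b := b) (by simp)
      refine ⟨w₁, σ, w₂, hu, ?_, h₂, hσ⟩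
      simpa using h₁.trans (scoredDerives_of_mem_prods hp l t)

theorem exists_term_splice_of_mem_lang {l r : List T} {y : T} (hz : l ++ y :: r ∈ G.lang) :
    ∃ A, (A, y) ∈ G.term ∧ ∀ {mid : List ((N ⊕ Unit) ⊕ T)} {c : ℕ},
      ScoredDerives G.augProds [Sum.inl (Sum.inl A)] mid c →
      ScoredDerives G.augProds [Sum.inl (Sum.inl G.start)]
        (l.map Sum.inr ++ mid ++ r.map Sum.inr) c := by
  obtain ⟨c, hc⟩ := hz
  obtain ⟨w₁, σ, w₂, hS, h₁, h₂, ⟨hu, rfl⟩ | ⟨A, rfl, hA⟩⟩ :=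
    exists_term_source hc (a := l.map Sum.inr) (x := y) (b := r.map Sum.inr) (by simp)
  · have : Sum.inr y ∈ [(Sum.inl G.start : N ⊕ T)] := by simp [hu]
    simp at this
  refine ⟨A, hA, fun hmid => ?_⟩
  have hS' := scoredDerives_lift hS
  have h₁' := scoredDerives_lift h₁
  have h₂' := scoredDerives_lift h₂
  simp only [List.map_append, List.map_map, List.map_cons, List.map_nil, Function.comp_def,
    Sum.map_inr, Sum.map_inl, id] at hS' h₁' h₂'
  simpa using hS'.trans ((h₁'.append hmid).append h₂')

theorem augDerives_one_of_oneEdit {s z : List T} (hz : z ∈ G.lang)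
    (hs : ¬ G.augDerives (Sum.inl G.start) s 0) (h : OneEdit s z) :
    G.augDerives (Sum.inl G.start) s 1 := by
  unfold augDerives at hs ⊢
  cases h with
  | insert l x r =>
    cases r with
    | nil =>
      have hl : ScoredDerives G.augProds [Sum.inl (Sum.inl G.start)] (l.map Sum.inr) 0 :=
        augDerives_zero_of_mem_lang (by simpa using hz)
      simpa using (ScoredDerives.single (G.insertRight_mem_augProds G.start)).trans
        (hl.append (.single (G.insert_mem_augProds x)))
    | cons y r =>
      obtain ⟨A, hA, hsplice⟩ := exists_term_splice_of_mem_lang hz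
      have hmid : ScoredDerives G.augProds [Sum.inl (Sum.inl A)] [Sum.inr x, Sum.inr y] 1 := by
        simpa using (ScoredDerives.single (G.insertLeft_mem_augProds A)).trans
          ((ScoredDerives.single (G.insert_mem_augProds x)).append
            (.single (G.term_mem_augProds hA)))
      simpa using hsplice hmid
  | delete l x r =>
    obtain ⟨A, hA, hsplice⟩ := exists_term_splice_of_mem_lang hz
    simpa using hsplice (.single (G.delete_mem_augProds hA))
  | replace l x y r =>
    obtain ⟨A, hA, hsplice⟩ := exists_term_splice_of_mem_lang hz
    by_cases hAx : (A, x) ∈ G.term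
    · exact absurd (by simpa using hsplice (.single (G.term_mem_augProds hAx))) hs
    · simpa using hsplice (.single (G.subst_mem_augProds hA hAx))

end CNF

theorem dG_le_editDist {N T : Type*} [DecidableEq T] {G : CNF N T} {s z : List T}
    (hz : z ∈ G.lang) : dG G s ≤ editDist s z :=
  Nat.sInf_le ⟨z, hz, rfl⟩

theorem exists_editDist_eq_dG {N T : Type*} [DecidableEq T] {G : CNF N T}
    (hne : G.lang.Nonempty) (s : List T) : ∃ z ∈ G.lang, editDist s z = dG G s :=
  Nat.sInf_mem (hne.image (editDist s))

/-- For every string `s` over `Σ`: `d_G(G,s) = 0` iff there is a derivation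
of `s` from `S` in `G_e` of score `0`; and `d_G(G,s) = 1` iff there is a derivation of `s`
from `S` in `G_e` of score `1` and none of score `0`. -/
theorem language_edit_distance_zero_one {N T : Type*} [DecidableEq T]
    (G : CNF N T) (hne : G.lang.Nonempty) (s : List T) :
    (dG G s = 0 ↔ G.augDerives (Sum.inl G.start) s 0) ∧
    (dG G s = 1 ↔
      (G.augDerives (Sum.inl G.start) s 1 ∧ ¬ G.augDerives (Sum.inl G.start) s 0)) := by
  obtain ⟨z₀, hz₀, hd₀⟩ := exists_editDist_eq_dG hne s
  have h0 : dG G s = 0 ↔ G.augDerives (Sum.inl G.start) s 0 := by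
    refine ⟨fun h => ?_, fun h => ?_⟩
    · rw [h, editDist_eq_zero_iff] at hd₀
      exact hd₀ ▸ CNF.augDerives_zero_of_mem_lang hz₀
    · obtain ⟨z, hz, hle⟩ := CNF.exists_mem_lang_editDist_le h
      have := dG_le_editDist (s := s) hz
      omega
  refine ⟨h0, fun h1 => ?_, fun ⟨h1, hn0⟩ => ?_⟩
  · have hn0 : ¬ G.augDerives (Sum.inl G.start) s 0 := by rw [← h0]; omega
    refine ⟨?_, hn0⟩
    rcases eq_or_oneEdit_of_editDist_le_one (hd₀.trans h1).le with rfl | hedit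
    · exact absurd (CNF.augDerives_zero_of_mem_lang hz₀) hn0
    · exact CNF.augDerives_one_of_oneEdit hz₀ hn0 hedit
  · obtain ⟨z, hz, hle⟩ := CNF.exists_mem_lang_editDist_le h1
    have := dG_le_editDist (s := s) hz
    rw [← h0] at hn0
    omega
end

section
/- Under the rounded binary-tree process: for every leaf l, Var(X_l) = (score(l) − ⌊score(l)⌋_δ)(⌈score(l)⌉_δ − score(l)); and for every internal node v with children v1 and v2, Var(X_v) ≤ Var(X_{v1}) + Var(X_{v2}) + δ·(Σ_{g ∈ L(v1)} score(g))·(Σ_{h ∈ L(v2)} score(h)). -/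
open MeasureTheory ProbabilityTheory
open scoped ENNReal

/-- `⌊log_{1+δ} y⌋` as a natural number (for `y ≥ 1` the logarithm is nonnegative). -/
noncomputable def rExp (δ y : ℝ) : ℕ := ⌊Real.logb (1 + δ) y⌋₊

/-- `⌊y⌋_δ = (1+δ)^{⌊log_{1+δ} y⌋}`. -/
noncomputable def rfloor (δ y : ℝ) : ℝ := (1 + δ) ^ rExp δ y

/-- `⌈y⌉_δ = (1+δ)^{⌈log_{1+δ} y⌉}`. -/
noncomputable def rceil (δ y : ℝ) : ℝ := (1 + δ) ^ (⌈Real.logb (1 + δ) y⌉₊)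

/-- The probability `k / (δ(1+δ)^r)` (where `y = (1+δ)^r + k`) that the randomized
rounding rounds up. -/
noncomputable def roundUpProb (δ y : ℝ) : ℝ≥0∞ :=
  ENNReal.ofReal ((y - rfloor δ y) / (δ * rfloor δ y))

/-- The randomized rounding `Round_δ(y)`: equal to `(1+δ)^r` with probability
`(δ(1+δ)^r − k)/(δ(1+δ)^r)` and to `(1+δ)^{r+1}` with probability `k/(δ(1+δ)^r)`,
where `y = (1+δ)^r + k`, `r = ⌊log_{1+δ} y⌋` and `k ∈ [0, δ(1+δ)^r)`.
(For `δ > 0` and `y ≥ 1` the probability `k/(δ(1+δ)^r)` lies in `[0,1)`, so the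
clamping `min · 1` below is vacuous.) -/
noncomputable def roundPMF (δ y : ℝ) : PMF ℝ :=
  (PMF.bernoulli (min (roundUpProb δ y).toNNReal 1) (min_le_right _ _)).map
    (fun b => if b then (1 + δ) ^ (rExp δ y + 1) else rfloor δ y)

/-- Expectation of a real-valued probability mass function. -/
noncomputable def pmfExp (p : PMF ℝ) : ℝ := ∫ x, x ∂p.toMeasure

/-- Variance of a real-valued probability mass function. -/
noncomputable def pmfVar (p : PMF ℝ) : ℝ := variance (fun x => x) p.toMeasure

/-- A finite rooted binary tree in which every internal node has exactly two children and
every leaf carries a real score. -/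
inductive BTree where
  | leaf (score : ℝ)
  | node (l r : BTree)

/-- The list of scores of the leaves of (the subtree rooted at) `t`. -/
def BTree.leafScores : BTree → List ℝ
  | .leaf y => [y]
  | .node l r => l.leafScores ++ r.leafScores

/-- The distribution of the random variable `X_v` of the rounded binary-tree process at
the root of `t`: at a leaf, `X_l = Round_δ(score(l))`, independently across leaves; at an
internal node `v` with children `v1, v2`, conditioned on `X_{v1}` and `X_{v2}`,
`X_v = Round_δ(X_{v1} + X_{v2})`. -/
noncomputable def treePMF (δ : ℝ) : BTree → PMF ℝ
  | .leaf y => roundPMF δ y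
  | .node l r => (treePMF δ l).bind fun x => (treePMF δ r).bind fun y => roundPMF δ (x + y)

/-- `Σ_{g < h} L_g · L_h`, the sum over unordered pairs of distinct positions of a list. -/
noncomputable def pairSum (L : List ℝ) : ℝ :=
  ∑ p ∈ (Finset.range L.length ×ˢ Finset.range L.length).filter (fun p => p.1 < p.2),
    L.getD p.1 0 * L.getD p.2 0

/-!
Randomized rounding is unbiased: `Round_δ(y)` has mean `y` and variance
`(y - a)((1 + δ)a - y)` with `a = ⌊y⌋_δ`. Hence every `X_v` takes values in powers of `1 + δ`
and has mean `Σ_{g ∈ L(v)} score(g)`. At an internal node the children are independent, and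
integrating out the rounding gives
`E[X_v²] = E[(X_{v1} + X_{v2})²] + E[Var Round_δ(X_{v1} + X_{v2})]`. For powers `x, z` of `1 + δ` we have `a = ⌊x + z⌋_δ ≥ max(x, z)`, and then
`δxz - (x + z - a)((1 + δ)a - x - z) = δ(a - x)(a - z) + (x + z - a)² ≥ 0`,
so the rounding variance at `x + z` is at most `δxz`; taking expectations gives the bound.
-/

section Rounding
variable {δ y : ℝ}

lemma rfloor_pos (hδ : 0 < δ) : 0 < rfloor δ y := pow_pos (by linarith) _

lemma rfloor_le (hδ : 0 < δ) (hy : 1 ≤ y) : rfloor δ y ≤ y := by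
  rw [rfloor, ← Real.rpow_natCast, ← Real.le_logb_iff_rpow_le (by linarith) (by linarith)]
  exact Nat.floor_le (Real.logb_nonneg (by linarith) hy)

lemma lt_rfloor_mul (hδ : 0 < δ) (hy : 0 < y) : y < rfloor δ y * (1 + δ) := by
  rw [rfloor, ← pow_succ, ← Real.rpow_natCast, ← Real.logb_lt_iff_lt_rpow (by linarith) hy]
  push_cast
  exact Nat.lt_floor_add_one _

lemma pow_le_rfloor (hδ : 0 < δ) {n : ℕ} (h : (1 + δ) ^ n ≤ y) :
    (1 + δ) ^ n ≤ rfloor δ y := by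
  have hy : 0 < y := lt_of_lt_of_le (pow_pos (by linarith) n) h
  rw [← Real.rpow_natCast, ← Real.le_logb_iff_rpow_le (by linarith) hy] at h
  exact pow_le_pow_right₀ (by linarith) (Nat.le_floor h)

lemma rceil_eq_rfloor_mul (hδ : 0 < δ) (hy : 0 < y) (h : rfloor δ y < y) :
    rceil δ y = rfloor δ y * (1 + δ) := by
  rw [rceil, rfloor, ← pow_succ]
  congr 1
  rw [Nat.ceil_eq_iff (Nat.succ_ne_zero _), Nat.succ_sub_one]
  constructor
  · rwa [rfloor, ← Real.rpow_natCast, ← Real.lt_logb_iff_rpow_lt (by linarith) hy] at h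
  · have h' := lt_rfloor_mul hδ hy
    rw [rfloor, ← pow_succ, ← Real.rpow_natCast, ← Real.logb_lt_iff_lt_rpow (by linarith) hy] at h'
    exact h'.le

/-- The variance of `Round_δ(y)`, with `⌈y⌉_δ` replaced by `(1 + δ)⌊y⌋_δ`: the two differ only
when `y` is a power of `1 + δ`, where the factor `y - ⌊y⌋_δ` vanishes. -/
noncomputable def roundVar (δ y : ℝ) : ℝ := (y - rfloor δ y) * (rfloor δ y * (1 + δ) - y)

lemma roundVar_eq (hδ : 0 < δ) (hy : 1 ≤ y) :
    roundVar δ y = (y - rfloor δ y) * (rceil δ y - y) := by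
  rcases (rfloor_le hδ hy).lt_or_eq with h | h
  · rw [roundVar, rceil_eq_rfloor_mul hδ (by linarith) h]
  · simp [roundVar, h]

lemma roundVar_add_pow_le (hδ : 0 < δ) (m n : ℕ) :
    roundVar δ ((1 + δ) ^ m + (1 + δ) ^ n) ≤ δ * (1 + δ) ^ m * (1 + δ) ^ n := by
  set x := (1 + δ) ^ m
  set z := (1 + δ) ^ n
  set a := rfloor δ (x + z)
  have hx : x ≤ a := pow_le_rfloor hδ (le_add_of_nonneg_right (by positivity))
  have hz : z ≤ a := pow_le_rfloor hδ (le_add_of_nonneg_left (by positivity))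
  have key : δ * x * z - roundVar δ (x + z) = δ * (a - x) * (a - z) + (x + z - a) ^ 2 := by
    simp only [roundVar, a]; ring
  linarith [mul_nonneg (mul_nonneg hδ.le (sub_nonneg.2 hx)) (sub_nonneg.2 hz),
    sq_nonneg (x + z - a)]

end Rounding

namespace PMF
variable {α β : Type*} {p : PMF α}

theorem finite_support_bind {q : α → PMF β} (hp : p.support.Finite)
    (hq : ∀ a ∈ p.support, (q a).support.Finite) : (p.bind q).support.Finite := by
  rw [support_bind]
  exact hp.biUnion hq

variable [MeasurableSpace α] [MeasurableSpace β]

theorem toMeasure_eq_sum_dirac {s : Finset α} (hs : p.support ⊆ s) :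
    p.toMeasure = ∑ a ∈ s, p a • Measure.dirac a := by
  ext t ht
  rw [toMeasure_apply p ht, tsum_eq_sum (s := s), Measure.coe_finsetSum, Finset.sum_apply]
  · refine Finset.sum_congr rfl fun a _ => ?_
    by_cases hat : a ∈ t <;> simp [Measure.dirac_apply' a ht, hat]
  · intro a ha
    simp [(apply_eq_zero_iff p a).2 fun h => ha (hs h)]

variable [MeasurableSingletonClass α] [MeasurableSingletonClass β]

theorem ae_mem_support (p : PMF α) : ∀ᵐ x ∂p.toMeasure, x ∈ p.support :=
  ae_iff.2 <| (toMeasure_apply_eq_zero_iff p p.support_countable.measurableSet.compl).2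
    disjoint_compl_right

theorem integrable_of_finite_support (hp : p.support.Finite) (f : α → ℝ) :
    Integrable f p.toMeasure := by
  rw [toMeasure_eq_sum_dirac hp.coe_toFinset.ge]
  exact integrable_finsetSum_measure.2 fun a _ =>
    (integrable_dirac (by simp)).smul_measure (p.apply_ne_top a)

theorem integral_eq_sum_of_support_subset {s : Finset α} (hs : p.support ⊆ s) (f : α → ℝ) :
    ∫ x, f x ∂p.toMeasure = ∑ a ∈ s, (p a).toReal * f a := by
  rw [toMeasure_eq_sum_dirac hs, integral_finsetSum_measure]
  · simp [integral_smul_measure]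
  · exact fun a _ => (integrable_dirac (by simp)).smul_measure (p.apply_ne_top a)

theorem integral_bind_of_finite_support {q : α → PMF β} (hp : p.support.Finite)
    (hq : ∀ a ∈ p.support, (q a).support.Finite) (f : β → ℝ) :
    ∫ x, f x ∂(p.bind q).toMeasure = ∫ a, ∫ x, f x ∂(q a).toMeasure ∂p.toMeasure := by
  set S := hp.toFinset
  set T := (finite_support_bind hp hq).toFinset
  have hT : ∀ a ∈ p.support, (q a).support ⊆ T := fun a ha x hx => by
    simpa [T] using ⟨a, ha, hx⟩
  have hbind : ∀ x, ((p.bind q) x).toReal = ∑ a ∈ S, (p a).toReal * (q a x).toReal := by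
    intro x
    rw [bind_apply, tsum_eq_sum (s := S) fun a ha => by
      rw [(apply_eq_zero_iff p a).2 (by simpa [S] using ha), zero_mul],
      ENNReal.toReal_sum fun a _ => ENNReal.mul_ne_top (p.apply_ne_top a) ((q a).apply_ne_top x)]
    simp [ENNReal.toReal_mul]
  rw [integral_eq_sum_of_support_subset (s := T) (by simp [T]) f,
    integral_eq_sum_of_support_subset (s := S) (by simp [S])]
  simp_rw [hbind, Finset.sum_mul]
  rw [Finset.sum_comm]
  refine Finset.sum_congr rfl fun a ha => ?_
  rw [integral_eq_sum_of_support_subset (s := T) (hT a (by simpa [S] using ha)), Finset.mul_sum]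
  simp [mul_assoc]

theorem integral_map_bernoulli {q : NNReal} (hq : q ≤ 1) (g : Bool → α) (f : α → ℝ) :
    ∫ x, f x ∂((bernoulli q hq).map g).toMeasure = (1 - q) * f (g false) + q * f (g true) := by
  have hfin : ((bernoulli q hq).map g).support.Finite := by
    rw [support_map]; exact Set.toFinite _
  have hg : Measurable g := measurable_from_top
  have hf := (integrable_of_finite_support hfin f).aestronglyMeasurable
  rw [← toMeasure_map _ _ hg] at hf ⊢
  rw [integral_map hg.aemeasurable hf, integral_eq_sum]
  simp [bernoulli_apply, NNReal.coe_sub hq]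
  ring

end PMF

lemma integral_add_mul_add_sq {μ : Measure ℝ} [IsProbabilityMeasure μ]
    (h1 : Integrable (fun x => x) μ) (h2 : Integrable (fun x => x ^ 2) μ) (c d : ℝ) :
    ∫ x, c + d * x + x ^ 2 ∂μ = c + d * ∫ x, x ∂μ + ∫ x, x ^ 2 ∂μ := by
  have h1' : Integrable (fun x => d * x) μ := h1.const_mul d
  rw [integral_add (f := fun x => c + d * x) ((integrable_const c).add h1') h2,
    integral_add (integrable_const c) h1', integral_const, integral_const_mul]
  simp

lemma pmfVar_eq_sub {p : PMF ℝ} (hp : p.support.Finite) :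
    pmfVar p = ∫ x, x ^ 2 ∂p.toMeasure - (∫ x, x ∂p.toMeasure) ^ 2 := by
  rw [pmfVar, variance_eq_sub
    ((memLp_two_iff_integrable_sq (f := fun x : ℝ => x) aestronglyMeasurable_id).2
      (PMF.integrable_of_finite_support hp _))]
  rfl

lemma support_roundPMF_subset (δ y : ℝ) :
    (roundPMF δ y).support ⊆ {rfloor δ y, (1 + δ) ^ (rExp δ y + 1)} := by
  rw [roundPMF, PMF.support_map]
  rintro x ⟨b, -, rfl⟩
  cases b <;> simp

lemma finite_support_roundPMF (δ y : ℝ) : (roundPMF δ y).support.Finite :=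
  (Set.toFinite _).subset (support_roundPMF_subset δ y)

section RoundPMF
variable {δ y : ℝ}

lemma roundUpProb_coe (hδ : 0 < δ) (hy : 1 ≤ y) :
    ((min (roundUpProb δ y).toNNReal 1 : NNReal) : ℝ) =
      (y - rfloor δ y) / (δ * rfloor δ y) := by
  have ha := rfloor_pos (y := y) hδ
  have hle : (y - rfloor δ y) / (δ * rfloor δ y) ≤ 1 := by
    rw [div_le_one (by positivity)]
    nlinarith [lt_rfloor_mul hδ (by linarith : 0 < y)]
  have hnn : 0 ≤ (y - rfloor δ y) / (δ * rfloor δ y) :=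
    div_nonneg (by linarith [rfloor_le hδ hy]) (by positivity)
  rw [roundUpProb, NNReal.coe_min, ENNReal.coe_toNNReal_eq_toReal, ENNReal.toReal_ofReal hnn,
    NNReal.coe_one, min_eq_left hle]

lemma integral_roundPMF (hδ : 0 < δ) (hy : 1 ≤ y) (f : ℝ → ℝ) :
    ∫ x, f x ∂(roundPMF δ y).toMeasure =
      (1 - (y - rfloor δ y) / (δ * rfloor δ y)) * f (rfloor δ y) +
        (y - rfloor δ y) / (δ * rfloor δ y) * f (rfloor δ y * (1 + δ)) := by
  rw [roundPMF, PMF.integral_map_bernoulli, roundUpProb_coe hδ hy]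
  simp [rfloor, pow_succ]

lemma integral_id_roundPMF (hδ : 0 < δ) (hy : 1 ≤ y) :
    ∫ x, x ∂(roundPMF δ y).toMeasure = y := by
  rw [integral_roundPMF hδ hy]
  have := rfloor_pos (y := y) hδ
  field_simp
  ring

lemma integral_sq_roundPMF (hδ : 0 < δ) (hy : 1 ≤ y) :
    ∫ x, x ^ 2 ∂(roundPMF δ y).toMeasure = y ^ 2 + roundVar δ y := by
  rw [integral_roundPMF hδ hy (· ^ 2), roundVar]
  have := rfloor_pos (y := y) hδ
  field_simp
  ring

lemma pmfVar_roundPMF (hδ : 0 < δ) (hy : 1 ≤ y) : pmfVar (roundPMF δ y) = roundVar δ y := by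
  rw [pmfVar_eq_sub (finite_support_roundPMF δ y), integral_sq_roundPMF hδ hy,
    integral_id_roundPMF hδ hy]
  ring

end RoundPMF

section Tree
variable {δ : ℝ}

lemma finite_support_treePMF : ∀ t : BTree, (treePMF δ t).support.Finite
  | .leaf y => finite_support_roundPMF δ y
  | .node l r =>
    PMF.finite_support_bind (finite_support_treePMF l) fun _ _ =>
      PMF.finite_support_bind (finite_support_treePMF r) fun _ _ =>
        finite_support_roundPMF δ _

lemma exists_eq_pow_of_mem_support_treePMF :
    ∀ (t : BTree) {x : ℝ}, x ∈ (treePMF δ t).support → ∃ n : ℕ, x = (1 + δ) ^ n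
  | .leaf y, x, hx => by
    rcases support_roundPMF_subset δ y hx with rfl | rfl
    exacts [⟨_, rfl⟩, ⟨_, rfl⟩]
  | .node l r, x, hx => by
    simp only [treePMF, PMF.mem_support_bind_iff] at hx
    obtain ⟨_, _, _, _, hx⟩ := hx
    rcases support_roundPMF_subset δ _ hx with rfl | rfl
    exacts [⟨_, rfl⟩, ⟨_, rfl⟩]

lemma one_le_of_mem_support_treePMF (hδ : 0 < δ) (t : BTree) {x : ℝ}
    (hx : x ∈ (treePMF δ t).support) : 1 ≤ x := by
  obtain ⟨n, rfl⟩ := exists_eq_pow_of_mem_support_treePMF t hx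
  exact one_le_pow₀ (by linarith)

lemma integral_treePMF_node (hδ : 0 < δ) (l r : BTree) {f g : ℝ → ℝ}
    (hfg : ∀ y, 1 ≤ y → ∫ x, f x ∂(roundPMF δ y).toMeasure = g y) :
    ∫ x, f x ∂(treePMF δ (.node l r)).toMeasure =
      ∫ a, ∫ b, g (a + b) ∂(treePMF δ r).toMeasure ∂(treePMF δ l).toMeasure := by
  have hround := finite_support_roundPMF δ
  rw [treePMF, PMF.integral_bind_of_finite_support (finite_support_treePMF l)
    fun _ _ => PMF.finite_support_bind (finite_support_treePMF r) fun _ _ => hround _]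
  refine integral_congr_ae ?_
  filter_upwards [PMF.ae_mem_support _] with a ha
  rw [PMF.integral_bind_of_finite_support (finite_support_treePMF r) fun _ _ => hround _]
  refine integral_congr_ae ?_
  filter_upwards [PMF.ae_mem_support _] with b hb
  have ha1 := one_le_of_mem_support_treePMF hδ l ha
  have hb1 := one_le_of_mem_support_treePMF hδ r hb
  exact hfg _ (by linarith)

lemma integral_id_treePMF_node (hδ : 0 < δ) (l r : BTree) :
    ∫ x, x ∂(treePMF δ (.node l r)).toMeasure =
      ∫ x, x ∂(treePMF δ l).toMeasure + ∫ x, x ∂(treePMF δ r).toMeasure := by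
  set P := (treePMF δ l).toMeasure
  set Q := (treePMF δ r).toMeasure
  have hP : ∀ f : ℝ → ℝ, Integrable f P :=
    PMF.integrable_of_finite_support (finite_support_treePMF l)
  have hQ : ∀ f : ℝ → ℝ, Integrable f Q :=
    PMF.integrable_of_finite_support (finite_support_treePMF r)
  calc ∫ x, x ∂(treePMF δ (.node l r)).toMeasure
      = ∫ a, ∫ b, a + b ∂Q ∂P :=
        integral_treePMF_node hδ l r fun _ => integral_id_roundPMF hδ
    _ = ∫ a, a + ∫ x, x ∂Q ∂P := by
        refine integral_congr_ae (.of_forall fun a => ?_)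
        dsimp only
        rw [integral_add (integrable_const a) (hQ _)]
        simp
    _ = _ := by
        rw [integral_add (hP _) (integrable_const _)]
        simp

lemma integral_id_treePMF (hδ : 0 < δ) :
    ∀ t : BTree, (∀ y ∈ t.leafScores, 1 ≤ y) →
      ∫ x, x ∂(treePMF δ t).toMeasure = t.leafScores.sum
  | .leaf y, ht => by
    simpa [treePMF, BTree.leafScores] using
      integral_id_roundPMF hδ (ht y (by simp [BTree.leafScores]))
  | .node l r, ht => by
    simp only [BTree.leafScores, List.mem_append, List.sum_append] at ht ⊢
    rw [integral_id_treePMF_node hδ, integral_id_treePMF hδ l fun y hy => ht y (.inl hy),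
      integral_id_treePMF hδ r fun y hy => ht y (.inr hy)]

lemma integral_sq_treePMF_node_le (hδ : 0 < δ) (l r : BTree) :
    ∫ x, x ^ 2 ∂(treePMF δ (.node l r)).toMeasure ≤
      ∫ x, x ^ 2 ∂(treePMF δ l).toMeasure +
        (2 + δ) * (∫ x, x ∂(treePMF δ l).toMeasure) * (∫ x, x ∂(treePMF δ r).toMeasure) +
          ∫ x, x ^ 2 ∂(treePMF δ r).toMeasure := by
  set P := (treePMF δ l).toMeasure
  set Q := (treePMF δ r).toMeasure
  have hP : ∀ f : ℝ → ℝ, Integrable f P :=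
    PMF.integrable_of_finite_support (finite_support_treePMF l)
  have hQ : ∀ f : ℝ → ℝ, Integrable f Q :=
    PMF.integrable_of_finite_support (finite_support_treePMF r)
  calc ∫ x, x ^ 2 ∂(treePMF δ (.node l r)).toMeasure
      = ∫ a, ∫ b, (a + b) ^ 2 + roundVar δ (a + b) ∂Q ∂P :=
        integral_treePMF_node hδ l r fun _ => integral_sq_roundPMF hδ
    _ ≤ ∫ a, ∫ b, a ^ 2 + (2 + δ) * a * b + b ^ 2 ∂Q ∂P := by
        refine integral_mono_ae (hP _) (hP _) ?_
        filter_upwards [PMF.ae_mem_support _] with a ha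
        refine integral_mono_ae (hQ _) (hQ _) ?_
        filter_upwards [PMF.ae_mem_support _] with b hb
        obtain ⟨m, rfl⟩ := exists_eq_pow_of_mem_support_treePMF l ha
        obtain ⟨n, rfl⟩ := exists_eq_pow_of_mem_support_treePMF r hb
        linarith [roundVar_add_pow_le hδ m n]
    _ = ∫ a, ∫ x, x ^ 2 ∂Q + ((2 + δ) * ∫ x, x ∂Q) * a + a ^ 2 ∂P := by
        refine integral_congr_ae (.of_forall fun a => ?_)
        dsimp only
        rw [integral_add_mul_add_sq (hQ _) (hQ _)]
        ring
    _ = _ := by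
        rw [integral_add_mul_add_sq (hP _) (hP _)]
        ring

lemma pmfVar_treePMF_node_le (hδ : 0 < δ) (l r : BTree) (hl : ∀ y ∈ l.leafScores, 1 ≤ y)
    (hr : ∀ y ∈ r.leafScores, 1 ≤ y) :
    pmfVar (treePMF δ (.node l r)) ≤
      pmfVar (treePMF δ l) + pmfVar (treePMF δ r) + δ * l.leafScores.sum * r.leafScores.sum := by
  rw [pmfVar_eq_sub (finite_support_treePMF _), pmfVar_eq_sub (finite_support_treePMF _),
    pmfVar_eq_sub (finite_support_treePMF _), integral_id_treePMF_node hδ,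
    ← integral_id_treePMF hδ l hl, ← integral_id_treePMF hδ r hr]
  linarith [integral_sq_treePMF_node_le hδ l r]

end Tree

/-- Under the rounded binary-tree process: for every leaf `l`,
`Var(X_l) = (score(l) − ⌊score(l)⌋_δ)(⌈score(l)⌉_δ − score(l))`; and for every internal
node `v` with children `v1`, `v2`,
`Var(X_v) ≤ Var(X_{v1}) + Var(X_{v2}) + δ·(Σ_{g ∈ L(v1)} score(g))·(Σ_{h ∈ L(v2)} score(h))`. -/
theorem treePMF_variance_step (δ : ℝ) (hδ : 0 < δ) :
    (∀ y : ℝ, 1 ≤ y →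
      pmfVar (treePMF δ (BTree.leaf y)) = (y - rfloor δ y) * (rceil δ y - y)) ∧
    (∀ l r : BTree, (∀ y ∈ l.leafScores, 1 ≤ y) → (∀ y ∈ r.leafScores, 1 ≤ y) →
      pmfVar (treePMF δ (BTree.node l r)) ≤
        pmfVar (treePMF δ l) + pmfVar (treePMF δ r) +
          δ * l.leafScores.sum * r.leafScores.sum) :=
  ⟨fun y hy => (pmfVar_roundPMF hδ hy).trans (roundVar_eq hδ hy),
    fun l r hl hr => pmfVar_treePMF_node_le hδ l r hl hr⟩
end

section
/- If there exist indices i, j, k with w(i,k) + w(k,j) + w(i,j) ≤ −1, then for those i, j one has C'(i,j) ≤ 3W² − W³ ≤ 0; and if w(i,k) + w(k,j) + w(i,j) ≥ 0 for all i, j, k, then C'(i,j) ≥ W² > 0 for all i, j. Consequently, the graph contains a negative-weight triangle if and only if C'(i,j) ≤ 0 for some pair (i,j). -/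
/-!
Shifting every weight by `M = W³` makes all factors positive, and
`(a + M)(b + M) − M² + M c = a b + M (a + b + c)`. Since `|a b| ≤ W²` is small compared with
`M`, the sign of this quantity is governed by the triangle weight `a + b + c`: at most
`W² − M` when the triangle is negative, at least `−W²` when it is not. Taking the minimum over
the middle vertex `k` transfers these bounds to `C'`.
-/

theorem add_mul_add_sub_sq_add_mul {R : Type*} [CommRing R] (a b c M : R) :
    (a + M) * (b + M) - M ^ 2 + M * c = a * b + M * (a + b + c) := by
  ring

section ShiftedProduct

variable {R : Type*} [CommRing R] [LinearOrder R] [IsStrictOrderedRing R]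

theorem abs_mul_le_sq_of_abs_le {a b W : R} (ha : |a| ≤ W) (hb : |b| ≤ W) : |a * b| ≤ W ^ 2 := by
  rw [abs_mul, sq]
  exact mul_le_mul ha hb (abs_nonneg b) ((abs_nonneg a).trans ha)

theorem add_mul_add_sub_sq_add_mul_le_of_add_add_le_neg_one {a b c M W : R}
    (ha : |a| ≤ W) (hb : |b| ≤ W) (hM : 0 ≤ M) (habc : a + b + c ≤ -1) :
    (a + M) * (b + M) - M ^ 2 + M * c ≤ W ^ 2 - M := by
  have hab := le_of_abs_le (abs_mul_le_sq_of_abs_le ha hb)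
  have htri : M * (a + b + c) ≤ -M := by simpa using mul_le_mul_of_nonneg_left habc hM
  rw [add_mul_add_sub_sq_add_mul]
  linarith

theorem neg_sq_le_add_mul_add_sub_sq_add_mul_of_nonneg {a b c M W : R}
    (ha : |a| ≤ W) (hb : |b| ≤ W) (hM : 0 ≤ M) (habc : 0 ≤ a + b + c) :
    -W ^ 2 ≤ (a + M) * (b + M) - M ^ 2 + M * c := by
  have hab := neg_le_of_abs_le (abs_mul_le_sq_of_abs_le ha hb)
  rw [add_mul_add_sub_sq_add_mul]
  linarith [mul_nonneg hM habc]

theorem three_mul_sq_sub_pow_three_nonpos {W : R} (hW : 3 ≤ W) : 3 * W ^ 2 - W ^ 3 ≤ 0 := by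
  have : 3 * W ^ 2 - W ^ 3 = W ^ 2 * (3 - W) := by ring
  rw [this]
  exact mul_nonpos_of_nonneg_of_nonpos (sq_nonneg W) (by linarith)

end ShiftedProduct

/-- With `C(i,j) = min_k (w(i,k) + W³)(w(k,j) + W³)` and
`C'(i,j) = C(i,j) − W⁶ + W³·w(i,j) + 2W²`:
if some triangle has `w(i,k) + w(k,j) + w(i,j) ≤ −1` then for those `i, j` one has
`C'(i,j) ≤ 3W² − W³ ≤ 0`; if all triangles have nonnegative weight then
`C'(i,j) ≥ W² > 0` for all `i, j`; consequently the graph contains a negative-weight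
triangle iff `C'(i,j) ≤ 0` for some pair `(i,j)`. -/
theorem negative_triangle_iff_Cprime_nonpos (n : ℕ) (hn : 0 < n) (W : ℤ) (hW : 3 ≤ W)
    (w : Fin n → Fin n → ℤ) (hbound : ∀ i j, |w i j| ≤ W) :
    let C : Fin n → Fin n → ℤ := fun i j =>
      Finset.univ.inf' ⟨⟨0, hn⟩, Finset.mem_univ _⟩
        (fun k => (w i k + W ^ 3) * (w k j + W ^ 3))
    let C' : Fin n → Fin n → ℤ := fun i j => C i j - W ^ 6 + W ^ 3 * w i j + 2 * W ^ 2
    (∀ i j : Fin n, (∃ k, w i k + w k j + w i j ≤ -1) →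
        C' i j ≤ 3 * W ^ 2 - W ^ 3) ∧
    3 * W ^ 2 - W ^ 3 ≤ 0 ∧
    ((∀ i j k : Fin n, 0 ≤ w i k + w k j + w i j) → ∀ i j, W ^ 2 ≤ C' i j) ∧
    0 < W ^ 2 ∧
    ((∃ i j k : Fin n, w i k + w k j + w i j ≤ -1) ↔ ∃ i j, C' i j ≤ 0) := by
  intro C C'
  have hM : 0 ≤ W ^ 3 := by positivity
  have hW6 : W ^ 6 = (W ^ 3) ^ 2 := by ring
  have hneg : ∀ i j : Fin n, (∃ k, w i k + w k j + w i j ≤ -1) →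
      C' i j ≤ 3 * W ^ 2 - W ^ 3 := by
    rintro i j ⟨k, hk⟩
    have hC : C i j ≤ (w i k + W ^ 3) * (w k j + W ^ 3) := Finset.inf'_le _ (Finset.mem_univ k)
    have := add_mul_add_sub_sq_add_mul_le_of_add_add_le_neg_one
      (hbound i k) (hbound k j) hM hk
    simp only [C', hW6]
    linarith
  have hnonneg : (∀ i j k : Fin n, 0 ≤ w i k + w k j + w i j) → ∀ i j, W ^ 2 ≤ C' i j := by
    intro hall i j
    have hC : W ^ 6 - W ^ 3 * w i j - W ^ 2 ≤ C i j := Finset.le_inf' _ _ fun k _ => by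
      have := neg_sq_le_add_mul_add_sub_sq_add_mul_of_nonneg
        (hbound i k) (hbound k j) hM (hall i j k)
      rw [hW6]
      linarith
    simp only [C']
    linarith
  have hnonpos := three_mul_sq_sub_pow_three_nonpos hW
  have hpos : 0 < W ^ 2 := by positivity
  refine ⟨hneg, hnonpos, hnonneg, hpos,
    fun ⟨i, j, k, hk⟩ => ⟨i, j, (hneg i j ⟨k, hk⟩).trans hnonpos⟩, ?_⟩
  rintro ⟨i, j, hij⟩
  by_contra! hno
  have := hnonneg (fun a b c => by linarith [hno a b c]) i j
  linarith
end
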